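/- arXiv:1510.02360 — 4 statements merged into one kernel-verified Lean document; each statement's English description precedes it below -/
import Mathlib

section
/- Let G be a group, K a subgroup of G, H a subgroup of G, and F a finite subset of G. If K ⊆ H·F (i.e., every element of K can be written as h·f with h ∈ H, f ∈ F) and K ∩ H is finite, then K is finite. -/
open MulOpposite Pointwise

section

variable {G : Type*} [Group G] {K H : Subgroup G}

/- Any `k ∈ K ∩ Hf` has `Hk = Hf`, so `K ∩ Hf = K ∩ Hk = (K ∩ H)k`. -/
theorem Subgroup.inter_rightCoset_subset {f k : G} (hk : k ∈ (K : Set G) ∩ op f • (H : Set G)) :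
    (K : Set G) ∩ op f • (H : Set G) ⊆ op k • ((K : Set G) ∩ H) := by
  rintro x ⟨hxK, hxH⟩
  rw [mem_rightCoset_iff] at hxH ⊢
  refine ⟨mul_mem hxK (inv_mem hk.1), ?_⟩
  have hkH : k * f⁻¹ ∈ H := (mem_rightCoset_iff f).mp hk.2
  simpa [mul_assoc] using mul_mem hxH (inv_mem hkH)

theorem Subgroup.finite_inter_rightCoset (hfin : ((K : Set G) ∩ H).Finite) (f : G) :
    ((K : Set G) ∩ op f • (H : Set G)).Finite := by
  rcases ((K : Set G) ∩ op f • (H : Set G)).eq_empty_or_nonempty with hempty | ⟨k, hk⟩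
  · exact hempty ▸ Set.finite_empty
  · exact hfin.smul_set.subset (Subgroup.inter_rightCoset_subset hk)

end

/-- If K ⊆ H·F with F finite and K ∩ H is finite, then K is finite. -/
theorem stmt_0 {G : Type*} [Group G] (K H : Subgroup G) (F : Finset G)
    (hKF : (K : Set G) ⊆ {x | ∃ h ∈ H, ∃ f ∈ F, x = h * f})
    (hfin : ((K : Set G) ∩ (H : Set G)).Finite) :
    (K : Set G).Finite := by
  have hcover : (K : Set G) ⊆ ⋃ f ∈ F, (K : Set G) ∩ op f • (H : Set G) := by
    intro x hx
    obtain ⟨h, hh, f, hf, rfl⟩ := hKF hx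
    exact Set.mem_biUnion hf ⟨hx, mem_rightCoset f hh⟩
  exact (F.finite_toSet.biUnion fun f _ => Subgroup.finite_inter_rightCoset hfin f).subset hcover
end

section
/- Let z : ℤⁿ → (ℤ/3ℤ)ⁿ be defined by z(p) = (p₁ mod 3, …, pₙ mod 3), and let Z be the orbit of z under the shift action of ℤⁿ (which has exactly 3ⁿ elements). If φ is an automorphism of ℤⁿ with φ(e_i) = ±e_i for each i, and the configuration p ↦ z(φ(p)) lies in Z, then φ(e_i) = e_i for all i, i.e., φ is the identity. -/
/-- Let z(p) = (p₁ mod 3, …, pₙ mod 3) and Z its orbit under the shift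
(g • x)(h) = x(h − g). If φ is an automorphism of ℤⁿ with φ(e_i) = ±e_i and
p ↦ z(φ(p)) lies in Z, then φ(e_i) = e_i for all i. -/
theorem stmt_12 {n : ℕ} (φ : (Fin n → ℤ) ≃+ (Fin n → ℤ))
    (hpm : ∀ i : Fin n, φ (Pi.single i 1) = Pi.single i 1 ∨
      φ (Pi.single i 1) = -Pi.single i 1)
    (hZ : ∃ g : Fin n → ℤ,
      (fun p (i : Fin n) => ((φ p i : ℤ) : ZMod 3)) =
        (fun p (i : Fin n) => (((p - g) i : ℤ) : ZMod 3))) :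
    ∀ i : Fin n, φ (Pi.single i 1) = Pi.single i 1 := by
  obtain ⟨g, hφg⟩ := hZ
  have hg : ∀ i, ((g i : ℤ) : ZMod 3) = 0 := fun i => by
    simpa using (congrFun (congrFun hφg 0) i).symm
  intro i
  refine (hpm i).resolve_right fun hneg => ?_
  have hi : (-1 : ZMod 3) = 1 := by
    simpa [hneg, hg] using congrFun (congrFun hφg (Pi.single i 1)) i
  exact absurd hi (by decide)
end

section
/- Let G be a group, H ≤ G, A a finite set, and 𝒫 a set of patterns with supports contained in H. Let X be the subshift of A^H defined by 𝒫 and Y the subshift of A^G defined by the same patterns. If K is a left transversal of H in G and (x^k)_{k∈K} is any family of points of X, then the configuration y defined by y(k·h) = x^k(h) belongs to Y. In particular, Y is nonempty if X is nonempty. -/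
/-- A pattern: a finitely supported partial function, encoded by its finite
support and values. -/
structure Pattern (G A : Type*) where
  supp : Finset G
  val : G → A

/-!
A configuration `y : A^G` avoids the patterns of `𝒫` at every position exactly when each of its
restrictions `q ↦ y (c * q)` to a left coset `cH` lies in `X_𝒫 ⊆ A^H`, because all supports lie
in `H`. The glued configuration restricts on the coset `k h H` to the `h`-translate of `x^k`, and
`X_𝒫` is shift-invariant.
-/

namespace Pattern

variable {G A : Type*} [Group G] {H : Subgroup G}

def subshift (Pats : Set (Pattern H A)) : Set (H → A) :=
  {z | ∀ h : H, ∀ P ∈ Pats, ∃ p ∈ P.supp, z (h⁻¹ * p) ≠ P.val p}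

def liftedSubshift (Pats : Set (Pattern H A)) : Set (G → A) :=
  {y | ∀ g : G, ∀ P ∈ Pats, ∃ p ∈ P.supp, y (g⁻¹ * (p : G)) ≠ P.val p}

theorem mul_left_mem_subshift {Pats : Set (Pattern H A)} {z : H → A} (hz : z ∈ subshift Pats)
    (h : H) : (fun q => z (h * q)) ∈ subshift Pats := by
  intro h' P hP
  obtain ⟨p, hp, hne⟩ := hz (h' * h⁻¹) P hP
  exact ⟨p, hp, by simpa [mul_assoc] using hne⟩

theorem mem_liftedSubshift_iff {Pats : Set (Pattern H A)} {y : G → A} :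
    y ∈ liftedSubshift Pats ↔ ∀ c : G, (fun q : H => y (c * q)) ∈ subshift Pats := by
  constructor
  · intro hy c h P hP
    obtain ⟨p, hp, hne⟩ := hy (h * c⁻¹) P hP
    exact ⟨p, hp, by simpa [mul_assoc] using hne⟩
  · intro hy g P hP
    obtain ⟨p, hp, hne⟩ := hy g⁻¹ 1 P hP
    exact ⟨p, hp, by simpa using hne⟩

end Pattern

open Pattern in
theorem stmt_17_general {G A : Type*} [Group G] (H : Subgroup G)
    (Pats : Set (Pattern H A)) (K : Set G)
    (htrans : ∀ g : G, ∃! kh : K × H, g = (kh.1 : G) * (kh.2 : G))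
    (x : K → (H → A))
    (hx : ∀ k : K, x k ∈ {z : H → A | ∀ h : H, ∀ P ∈ Pats,
      ∃ p ∈ P.supp, z (h⁻¹ * p) ≠ P.val p})
    (y : G → A)
    (hy : ∀ (k : K) (h : H), y ((k : G) * (h : G)) = x k h) :
    y ∈ {y' : G → A | ∀ g : G, ∀ P ∈ Pats,
        ∃ p ∈ P.supp, y' (g⁻¹ * (p : G)) ≠ P.val p} ∧
    ({z : H → A | ∀ h : H, ∀ P ∈ Pats,
        ∃ p ∈ P.supp, z (h⁻¹ * p) ≠ P.val p}.Nonempty →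
      {y' : G → A | ∀ g : G, ∀ P ∈ Pats,
        ∃ p ∈ P.supp, y' (g⁻¹ * (p : G)) ≠ P.val p}.Nonempty) := by
  have hY : y ∈ liftedSubshift Pats := by
    refine mem_liftedSubshift_iff.mpr fun c => ?_
    obtain ⟨⟨k, h⟩, rfl, -⟩ := htrans c
    have hcoset : (fun q : H => y ((k : G) * h * q)) = fun q => x k (h * q) := by
      funext q
      rw [mul_assoc, ← Subgroup.coe_mul, hy]
    rw [hcoset]
    exact mul_left_mem_subshift (hx k) h
  exact ⟨hY, fun _ => ⟨y, hY⟩⟩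

/-- Gluing points of the H-subshift X along a left transversal of H in G gives
a point of the G-subshift Y defined by the same patterns; in particular Y is
nonempty whenever X is. -/
theorem stmt_17 {G A : Type*} [Group G] [Finite A] (H : Subgroup G)
    (Pats : Set (Pattern H A)) (K : Set G)
    (htrans : ∀ g : G, ∃! kh : K × H, g = (kh.1 : G) * (kh.2 : G))
    (x : K → (H → A))
    (hx : ∀ k : K, x k ∈ {z : H → A | ∀ h : H, ∀ P ∈ Pats,
      ∃ p ∈ P.supp, z (h⁻¹ * p) ≠ P.val p})
    (y : G → A)
    (hy : ∀ (k : K) (h : H), y ((k : G) * (h : G)) = x k h) :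
    y ∈ {y' : G → A | ∀ g : G, ∀ P ∈ Pats,
        ∃ p ∈ P.supp, y' (g⁻¹ * (p : G)) ≠ P.val p} ∧
    ({z : H → A | ∀ h : H, ∀ P ∈ Pats,
        ∃ p ∈ P.supp, z (h⁻¹ * p) ≠ P.val p}.Nonempty →
      {y' : G → A | ∀ g : G, ∀ P ∈ Pats,
        ∃ p ∈ P.supp, y' (g⁻¹ * (p : G)) ≠ P.val p}.Nonempty) :=
  stmt_17_general H Pats K htrans x hx y hy
end

section
/- Let G be a group containing finitely generated subgroups H₁ ⊆ H₂ with H₁ normal in G. Suppose for each point of some G-invariant nonempty set Y₁ ⊆ A₁^G the stabilizer is contained in H₁·F for a fixed finite set F, and for each point of some G-invariant nonempty set Y₂ ⊆ A₂^G the stabilizer intersects H₂ in a finite set. Then every point of Y₁ × Y₂ ⊆ (A₁ × A₂)^G (with the diagonal action) has finite stabilizer. -/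
/-! The joint stabilizer `S` of `(y₁, y₂)` is a subgroup of `G`. It is covered by the finitely many
right cosets `H₁ f`, `f ∈ F`, and inside each such coset it is a single translate of `S ∩ H₁`;
since `S ∩ H₁ ⊆ Stab(y₂) ∩ H₂` is finite, so is `S`. -/

open Pointwise MulAction

theorem Subgroup.finite_of_subset_mul_finset {G : Type*} [Group G] (S N : Subgroup G)
    (F : Finset G) (hSF : (S : Set G) ⊆ (N : Set G) * F)
    (hSN : ((S ⊓ N : Subgroup G) : Set G).Finite) : (S : Set G).Finite := by
  have hcover : (S : Set G) ⊆ ⋃ f ∈ F, {g ∈ S | g * f⁻¹ ∈ N} := by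
    intro g hg
    obtain ⟨n, hn, f, hf, rfl⟩ := hSF hg
    exact Set.mem_biUnion hf ⟨hg, by simpa using hn⟩
  refine (F.finite_toSet.biUnion fun f _ => ?_).subset hcover
  rcases Set.eq_empty_or_nonempty {g ∈ S | g * f⁻¹ ∈ N} with h | ⟨g₀, hg₀S, hg₀N⟩
  · simp [h]
  · refine (hSN.image (· * g₀)).subset ?_
    rintro g ⟨hgS, hgN⟩
    refine ⟨g * g₀⁻¹, ⟨S.mul_mem hgS (S.inv_mem hg₀S), ?_⟩, inv_mul_cancel_right g g₀⟩
    simpa [mul_assoc] using N.mul_mem hgN (N.inv_mem hg₀N)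

section Shift

-- Under `arrowAction`, `g • y = fun h => y (g⁻¹ * h)` definitionally, so the sets in the
-- hypotheses are the stabilizers `stabilizer G y`.
attribute [local instance] arrowAction

theorem stmt_19_general {G A₁ A₂ : Type*} [Group G] (H₁ H₂ : Subgroup G)
    (hle : H₁ ≤ H₂)
    (F : Finset G) (Y₁ : Set (G → A₁)) (Y₂ : Set (G → A₂))
    (hstab₁ : ∀ y ∈ Y₁, {g : G | (fun h => y (g⁻¹ * h)) = y} ⊆
      {x : G | ∃ h ∈ H₁, ∃ f ∈ F, x = h * f})
    (hstab₂ : ∀ y ∈ Y₂, ({g : G | (fun h => y (g⁻¹ * h)) = y} ∩ (H₂ : Set G)).Finite) :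
    ∀ y₁ ∈ Y₁, ∀ y₂ ∈ Y₂,
      {g : G | (fun h => y₁ (g⁻¹ * h)) = y₁ ∧ (fun h => y₂ (g⁻¹ * h)) = y₂}.Finite := by
  intro y₁ hy₁ y₂ hy₂
  have hS₁ : (stabilizer G y₁ : Set G) ⊆ (H₁ : Set G) * F := by
    intro g hg
    obtain ⟨h, hh, f, hf, rfl⟩ := hstab₁ y₁ hy₁ hg
    exact Set.mul_mem_mul hh hf
  exact (stabilizer G y₁ ⊓ stabilizer G y₂).finite_of_subset_mul_finset H₁ F
    (inf_le_left.trans hS₁) ((hstab₂ y₂ hy₂).subset fun g hg => ⟨hg.1.2, hle hg.2⟩)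

/-- If stabilizers of points of Y₁ lie in H₁·F (F finite) and stabilizers of
points of Y₂ meet H₂ ⊇ H₁ in a finite set, then every point of Y₁ × Y₂ has
finite stabilizer under the diagonal shift action. -/
theorem stmt_19 {G A₁ A₂ : Type*} [Group G] (H₁ H₂ : Subgroup G)
    (hle : H₁ ≤ H₂) [H₁.Normal] (hfg1 : H₁.FG) (hfg2 : H₂.FG)
    (F : Finset G) (Y₁ : Set (G → A₁)) (Y₂ : Set (G → A₂))
    (hY₁ne : Y₁.Nonempty) (hY₂ne : Y₂.Nonempty)
    (hY₁inv : ∀ g : G, ∀ y ∈ Y₁, (fun h => y (g⁻¹ * h)) ∈ Y₁)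
    (hY₂inv : ∀ g : G, ∀ y ∈ Y₂, (fun h => y (g⁻¹ * h)) ∈ Y₂)
    (hstab₁ : ∀ y ∈ Y₁, {g : G | (fun h => y (g⁻¹ * h)) = y} ⊆
      {x : G | ∃ h ∈ H₁, ∃ f ∈ F, x = h * f})
    (hstab₂ : ∀ y ∈ Y₂, ({g : G | (fun h => y (g⁻¹ * h)) = y} ∩ (H₂ : Set G)).Finite) :
    ∀ y₁ ∈ Y₁, ∀ y₂ ∈ Y₂,
      {g : G | (fun h => y₁ (g⁻¹ * h)) = y₁ ∧ (fun h => y₂ (g⁻¹ * h)) = y₂}.Finite :=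
  stmt_19_general H₁ H₂ hle F Y₁ Y₂ hstab₁ hstab₂

end Shift
end
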